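/- arXiv:1906.03557 — 10 statements merged into one kernel-verified Lean document; each statement's English description precedes it below -/
import Mathlib

section
/- Characterization of deterministic noninterference at the hyper level: for a relation R ⊆ Σ × Σ and an equivalence relation ∼ on Σ, let A = { p : Set Σ | ∀ σ τ ∈ p, σ ∼ τ } be the collection of sets whose elements all agree under ∼. Then R satisfies deterministic noninterference (∀ σ σ' τ τ', σ R σ' ∧ τ R τ' ∧ σ ∼ τ → σ' ∼ τ') if and only if ⟨⟨R⟩⟩ A ⊆ A, where ⟨⟨R⟩⟩ is the direct image of the function ⟨R⟩. -/
/-- Direct image of a relation `R ⊆ A × B`, as a map `Set A → Set B`. -/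
def dirimg {α β : Type*} (R : Set (α × β)) : Set α → Set β :=
  fun p => {y | ∃ x ∈ p, (x, y) ∈ R}

/-- Direct image of a function `Set A → Set B` viewed as a relation. -/
def fimg {α β : Type*} (φ : Set α → Set β) : Set (Set α) → Set (Set β) :=
  fun Q => {q | ∃ p ∈ Q, q = φ p}

/-- Subset closure of a collection of sets. -/
def ssc {α : Type*} (Q : Set (Set α)) : Set (Set α) := {p | ∃ q ∈ Q, p ⊆ q}

/-- PSC: the transformer is monotone and every subset of an image is the image of a subset. -/
def PSC {α β : Type*} (φ : Set α → Set β) : Prop :=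
  Monotone φ ∧ ∀ q r, r ⊆ φ q → ∃ s, s ⊆ q ∧ φ s = r

/-- Universally disjunctive: preserves arbitrary unions. -/
def UnivDisj {α β : Type*} (φ : Set α → Set β) : Prop :=
  ∀ S : Set (Set α), φ (⋃₀ S) = ⋃ p ∈ S, φ p

/-- Domain of a transformer. -/
def Dom {α β : Type*} (φ : Set α → Set β) : Set α := {x | φ {x} ≠ ∅}

/-- Forward relational composition. -/
def relComp {α : Type*} (R S : Set (α × α)) : Set (α × α) :=
  {p | ∃ z, (p.1, z) ∈ R ∧ (z, p.2) ∈ S}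

/-- Coreflexive relation determined by a set. -/
def coref {α : Type*} (B : Set α) : Set (α × α) := {p | p.1 = p.2 ∧ p.1 ∈ B}

/-- Inner join of h-transformers. -/
def innerJoin {α : Type*} (Φ Ψ : Set (Set α) → Set (Set α)) : Set (Set α) → Set (Set α) :=
  fun Q => {t | ∃ p ∈ Q, ∃ r ∈ Φ {u | u ⊆ p}, ∃ s ∈ Ψ {u | u ⊆ p}, t = r ∪ s}

/-- Hyper-conditional with guard set `B`. -/
def hcond {α : Type*} (B : Set α) (Φ Ψ : Set (Set α) → Set (Set α)) :
    Set (Set α) → Set (Set α) :=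
  fun Q => {t | ∃ p ∈ Q, ∃ r ∈ Φ {u | u ⊆ p ∩ B}, ∃ s ∈ Ψ {u | u ⊆ p \ B}, t = r ∪ s}

/-- A relation `R` satisfies deterministic noninterference w.r.t. an equivalence
relation `∼` iff `⟨⟨R⟩⟩ A ⊆ A`, where `A` is the collection of sets all of whose
elements agree under `∼`. -/
theorem stmt3 {σ : Type*} (R : Set (σ × σ)) (r : σ → σ → Prop) (hr : Equivalence r) :
    (∀ s s' t t', (s, s') ∈ R → (t, t') ∈ R → r s t → r s' t') ↔
      fimg (dirimg R) {p : Set σ | ∀ a ∈ p, ∀ b ∈ p, r a b} ⊆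
        {p : Set σ | ∀ a ∈ p, ∀ b ∈ p, r a b} := by
  constructor
  · rintro h q ⟨p, hp, rfl⟩ a ⟨x, hx, hxa⟩ b ⟨y, hy, hyb⟩
    exact h x a y b hxa hyb (hp x hx y hy)
  · intro h s s' t t' hs ht hst
    have : ({s, t} : Set σ) ∈ {p : Set σ | ∀ a ∈ p, ∀ b ∈ p, r a b} := by
      rintro a (rfl | rfl) b (rfl | rfl)
      exacts [hr.refl _, hst, hr.symm hst, hr.refl _]
    have := h ⟨{s, t}, this, rfl⟩
    exact this s' ⟨s, Or.inl rfl, hs⟩ t' ⟨t, Or.inr rfl, ht⟩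
end

section
/- Proposition 1 (agreement of relational and transformer semantics): for every command c of the language, the direct image of the relational semantics equals the transformer semantics: ⟨⟦c⟧ᵣ⟩ = ⟦c⟧ₜ. -/
/-- Commands over atoms `A` and boolean expressions `B`. -/
inductive Cmd (A B : Type*) where
  | atom : A → Cmd A B
  | skip : Cmd A B
  | seq : Cmd A B → Cmd A B → Cmd A B
  | choice : Cmd A B → Cmd A B → Cmd A B
  | ite : B → Cmd A B → Cmd A B → Cmd A B
  | whileDo : B → Cmd A B → Cmd A B

/-- Relational semantics: `⟦c⟧ᵣ ⊆ Σ × Σ`. The while case is the least fixpoint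
(Knaster–Tarski: `sInf` of the prefixpoints) of `F R = ⟦b⟧;⟦c⟧;R ∪ ⟦¬b⟧`. -/
def relSem {σ A B : Type*} (ratm : A → Set (σ × σ)) (bsem : B → Set σ) :
    Cmd A B → Set (σ × σ)
  | .atom a => ratm a
  | .skip => {p | p.1 = p.2}
  | .seq c d => relComp (relSem ratm bsem c) (relSem ratm bsem d)
  | .choice c d => relSem ratm bsem c ∪ relSem ratm bsem d
  | .ite b c d =>
      relComp (coref (bsem b)) (relSem ratm bsem c) ∪
        relComp (coref (bsem b)ᶜ) (relSem ratm bsem d)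
  | .whileDo b c =>
      sInf {R | relComp (coref (bsem b)) (relComp (relSem ratm bsem c) R) ∪
        coref (bsem b)ᶜ ⊆ R}

/-- Transformer semantics `⟦c⟧ₜ : Set Σ → Set Σ`. The while case is the least
fixpoint (`sInf` of the prefixpoints, in the pointwise-ordered lattice of all
functions `Set Σ → Set Σ`) of `G φ p = φ (⟦c⟧ₜ (p ∩ B)) ∪ (p \ B)`. -/
def tSem {σ A B : Type*} (ratm : A → Set (σ × σ)) (bsem : B → Set σ) :
    Cmd A B → Set σ → Set σ
  | .atom a => dirimg (ratm a)
  | .skip => id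
  | .seq c d => fun p => tSem ratm bsem d (tSem ratm bsem c p)
  | .choice c d => fun p => tSem ratm bsem c p ∪ tSem ratm bsem d p
  | .ite b c d => fun p => tSem ratm bsem c (p ∩ bsem b) ∪ tSem ratm bsem d (p \ bsem b)
  | .whileDo b c =>
      sInf {φ | (fun p => φ (tSem ratm bsem c (p ∩ bsem b)) ∪ (p \ bsem b)) ≤ φ}

/-- Membership in `Dpset (𝒫 Σ)`: nonempty and subset closed. -/
def InDpset {α : Type*} (Q : Set (Set α)) : Prop := Q.Nonempty ∧ Q = ssc Q

/-- Least fixpoint of `H` in the complete lattice of monotone functions on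
`Dpset (𝒫 Σ)` (nonempty subset-closed collections ordered by `⊆`), where infima
are pointwise intersections; by Knaster–Tarski it is the pointwise intersection
of all monotone `Dpset`-preserving prefixpoints of `H`. -/
def hlfp {α : Type*} (H : (Set (Set α) → Set (Set α)) → (Set (Set α) → Set (Set α))) :
    Set (Set α) → Set (Set α) :=
  fun Q => ⋂₀ {R | ∃ Φ : Set (Set α) → Set (Set α),
    (∀ Q', InDpset Q' → InDpset (Φ Q')) ∧
    (∀ Q₁ Q₂, InDpset Q₁ → InDpset Q₂ → Q₁ ⊆ Q₂ → Φ Q₁ ⊆ Φ Q₂) ∧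
    (∀ Q', InDpset Q' → H Φ Q' ⊆ Φ Q') ∧ R = Φ Q}

/-- H-transformer semantics `⟦c⟧ₕ : Set (Set Σ) → Set (Set Σ)`. The while case is
the least fixpoint of `H Φ = (Φ ∘ ⟦c⟧ₕ) ◁B▷ id` in the complete lattice of
monotone functions on `Dpset (𝒫 Σ)`. -/
def hSem {σ A B : Type*} (ratm : A → Set (σ × σ)) (bsem : B → Set σ) :
    Cmd A B → Set (Set σ) → Set (Set σ)
  | .atom a => fimg (dirimg (ratm a))
  | .skip => id
  | .seq c d => fun Q => hSem ratm bsem d (hSem ratm bsem c Q)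
  | .choice c d => innerJoin (hSem ratm bsem c) (hSem ratm bsem d)
  | .ite b c d => hcond (bsem b) (hSem ratm bsem c) (hSem ratm bsem d)
  | .whileDo b c => hlfp (fun Φ => hcond (bsem b) (fun Q => Φ (hSem ratm bsem c Q)) id)

/-- A command contains no nondeterministic choice `⊓`. -/
def NoChoice {A B : Type*} : Cmd A B → Prop
  | .atom _ => True
  | .skip => True
  | .seq c d => NoChoice c ∧ NoChoice d
  | .choice _ _ => False
  | .ite _ c d => NoChoice c ∧ NoChoice d
  | .whileDo _ c => NoChoice c


lemma dirimg_comp {α : Type*} (R S : Set (α × α)) (p : Set α) :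
    dirimg (relComp R S) p = dirimg S (dirimg R p) := by
  ext y
  constructor
  · rintro ⟨x, hx, z, hR, hS⟩
    exact ⟨z, ⟨x, hx, hR⟩, hS⟩
  · rintro ⟨z, ⟨x, hx, hR⟩, hS⟩
    exact ⟨x, hx, z, hR, hS⟩

lemma dirimg_coref {α : Type*} (B : Set α) (p : Set α) :
    dirimg (coref B) p = p ∩ B := by
  ext y
  constructor
  · rintro ⟨x, hx, h1, h2⟩; simp only at h1 h2; subst h1; exact ⟨hx, h2⟩
  · rintro ⟨h1, h2⟩; exact ⟨y, h1, rfl, h2⟩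

lemma dirimg_union {α : Type*} (R S : Set (α × α)) (p : Set α) :
    dirimg (R ∪ S) p = dirimg R p ∪ dirimg S p := by
  ext y
  constructor
  · rintro ⟨x, hx, h | h⟩
    · exact Or.inl ⟨x, hx, h⟩
    · exact Or.inr ⟨x, hx, h⟩
  · rintro (⟨x, hx, h⟩ | ⟨x, hx, h⟩)
    · exact ⟨x, hx, Or.inl h⟩
    · exact ⟨x, hx, Or.inr h⟩

lemma dirimg_mono {α : Type*} {R S : Set (α × α)} (h : R ⊆ S) (p : Set α) :
    dirimg R p ⊆ dirimg S p := by
  rintro y ⟨x, hx, hR⟩; exact ⟨x, hx, h hR⟩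

lemma relComp_mono_right {α : Type*} (R : Set (α × α)) {S T : Set (α × α)}
    (h : S ⊆ T) : relComp R S ⊆ relComp R T := by
  rintro ⟨x, y⟩ ⟨z, h1, h2⟩; exact ⟨z, h1, h h2⟩

/-- Proposition 1: for every command `c`, the direct image of the relational
semantics equals the transformer semantics: `⟨⟦c⟧ᵣ⟩ = ⟦c⟧ₜ`. -/
theorem stmt4 {σ A B : Type*} (ratm : A → Set (σ × σ)) (bsem : B → Set σ)
    (c : Cmd A B) :
    dirimg (relSem ratm bsem c) = tSem ratm bsem c := by
  induction c with
  | atom a => rfl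
  | skip =>
      funext p; ext y
      constructor
      · rintro ⟨x, hx, h⟩
        have h' : x = y := h
        subst h'; exact hx
      · intro hy; exact ⟨y, hy, rfl⟩
  | seq c d ihc ihd =>
      funext p
      simp only [relSem, tSem, dirimg_comp, ihc, ihd]
  | choice c d ihc ihd =>
      funext p
      simp only [relSem, tSem, dirimg_union, ihc, ihd]
  | ite b c d ihc ihd =>
      funext p
      simp only [relSem, tSem, dirimg_union, dirimg_comp, dirimg_coref, ihc, ihd]
      rfl
  | whileDo b c ihc =>
      set Bb := bsem b
      set Rc := relSem ratm bsem c with hRc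
      set W := sInf {R | relComp (coref Bb) (relComp Rc R) ∪ coref Bbᶜ ⊆ R} with hW
      have hWeq : relSem ratm bsem (Cmd.whileDo b c) = W := rfl
      have hTc : tSem ratm bsem c = dirimg Rc := ihc.symm
      -- W is a prefixpoint
      have hFW : relComp (coref Bb) (relComp Rc W) ∪ coref Bbᶜ ⊆ W := by
        apply Set.subset_sInter
        intro R hR
        refine subset_trans ?_ hR
        apply Set.union_subset_union_left
        apply relComp_mono_right
        apply relComp_mono_right
        exact Set.sInter_subset_of_mem hR
      rw [hWeq]
      show dirimg W = tSem ratm bsem (Cmd.whileDo b c)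
      apply le_antisymm
      · -- dirimg W ≤ every prefixpoint φ
        apply le_sInf
        intro φ hφ
        simp only [Set.mem_setOf_eq] at hφ
        set Rφ : Set (σ × σ) := {q | ∀ p, q.1 ∈ p → q.2 ∈ φ p} with hRφ
        have hWR : W ⊆ Rφ := by
          apply sInf_le
          rintro ⟨x, y⟩ (⟨z, ⟨hxz, hxB⟩, z', hzz', hz'y⟩ | ⟨hxy, hxB⟩)
          · have h' : x = z := hxz
            subst h'
            intro p hxp
            have hz' : z' ∈ tSem ratm bsem c (p ∩ Bb) := by
              rw [hTc]; exact ⟨x, ⟨hxp, hxB⟩, hzz'⟩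
            have := hz'y _ hz'
            have h2 := hφ p
            exact h2 (Or.inl this)
          · have h' : x = y := hxy
            subst h'
            intro p hxp
            exact hφ p (Or.inr ⟨hxp, hxB⟩)
        intro p
        rintro y ⟨x, hxp, hxy⟩
        exact (hWR hxy) p hxp
      · -- T ≤ dirimg W : dirimg W is a prefixpoint
        apply sInf_le
        intro p
        rintro y (hy | hy)
        · -- y ∈ dirimg W (tSem c (p ∩ Bb))
          rw [hTc] at hy
          rw [← dirimg_comp] at hy
          have : dirimg (coref Bb) p = p ∩ Bb := dirimg_coref Bb p
          rw [← this, ← dirimg_comp] at hy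
          refine dirimg_mono ?_ p hy
          exact subset_trans Set.subset_union_left hFW
        · -- y ∈ p \ Bb
          have : y ∈ dirimg (coref Bbᶜ) p := by
            rw [dirimg_coref]; exact ⟨hy.1, hy.2⟩
          refine dirimg_mono ?_ p this
          exact subset_trans Set.subset_union_right hFW
end

section
/- The direct image of a pointwise join of transformers is refined by the inner join of their direct images: for any φ, ψ : Set Σ → Set Σ, ⟨φ ⊔ ψ⟩ ⊑ ⟨φ⟩ ⩏ ⟨ψ⟩, i.e., for every Q : Set (Set Σ), ⟨φ ⊔ ψ⟩ Q ⊆ (⟨φ⟩ ⩏ ⟨ψ⟩) Q, where (φ ⊔ ψ) p = φ p ∪ ψ p. -/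
/-- The direct image of a pointwise join of transformers is refined by the
inner join of their direct images: `⟨φ ⊔ ψ⟩ ⊑ ⟨φ⟩ ⩏ ⟨ψ⟩`. -/
theorem stmt6 {σ : Type*} (φ ψ : Set σ → Set σ) :
    ∀ Q : Set (Set σ), fimg (fun p => φ p ∪ ψ p) Q ⊆ innerJoin (fimg φ) (fimg ψ) Q := by
  intro Q q hq
  obtain ⟨p, hp, rfl⟩ := hq
  exact ⟨p, hp, φ p, ⟨p, le_refl p, rfl⟩, ψ p, ⟨p, le_refl p, rfl⟩, rfl⟩
end

section
/- Lemma 2 (conditional refines its lift): for any guard set B ⊆ Σ, transformers φ, ψ : Set Σ → Set Σ, and h-transformers Φ, Ψ : Set (Set Σ) → Set (Set Σ), if ⟨φ⟩ ⊑ Φ and ⟨ψ⟩ ⊑ Ψ then ⟨χ⟩ ⊑ Φ ◁B▷ Ψ, where χ is the conditional transformer χ p = φ (p ∩ B) ∪ ψ (p \ B) and ⊑ is pointwise set inclusion. -/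
/-- Lemma 2: if `⟨φ⟩ ⊑ Φ` and `⟨ψ⟩ ⊑ Ψ`, then the lift of the conditional
transformer `χ p = φ (p ∩ B) ∪ ψ (p \ B)` refines the hyper-conditional:
`⟨χ⟩ ⊑ Φ ◁B▷ Ψ`. -/
theorem stmt8 {σ : Type*} (B : Set σ) (φ ψ : Set σ → Set σ)
    (Φ Ψ : Set (Set σ) → Set (Set σ))
    (hφ : ∀ Q, fimg φ Q ⊆ Φ Q) (hψ : ∀ Q, fimg ψ Q ⊆ Ψ Q) :
    ∀ Q, fimg (fun p => φ (p ∩ B) ∪ ψ (p \ B)) Q ⊆ hcond B Φ Ψ Q := by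
  intro Q q hq
  obtain ⟨p, hp, rfl⟩ := hq
  exact ⟨p, hp, φ (p ∩ B), hφ _ ⟨p ∩ B, fun _ h => h, rfl⟩,
    ψ (p \ B), hψ _ ⟨p \ B, fun _ h => h, rfl⟩, rfl⟩
end

section
/- Lemma 3 (on subset closed collections, the lift of a conditional equals the hyper-conditional of the lifts): for any guard set B ⊆ Σ, transformers φ, ψ : Set Σ → Set Σ, and any Q : Set (Set Σ) that is subset closed (Q = ssc Q), one has ⟨χ⟩ Q = (⟨φ⟩ ◁B▷ ⟨ψ⟩) Q, where χ is the conditional transformer χ p = φ (p ∩ B) ∪ ψ (p \ B). -/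
/-- Lemma 3: on subset closed collections, the lift of the conditional
transformer `χ p = φ (p ∩ B) ∪ ψ (p \ B)` equals the hyper-conditional of the
lifts: `⟨χ⟩ Q = (⟨φ⟩ ◁B▷ ⟨ψ⟩) Q` whenever `Q = ssc Q`. -/
theorem stmt9 {σ : Type*} (B : Set σ) (φ ψ : Set σ → Set σ)
    (Q : Set (Set σ)) (hQ : Q = ssc Q) :
    fimg (fun p => φ (p ∩ B) ∪ ψ (p \ B)) Q = hcond B (fimg φ) (fimg ψ) Q := by
  ext t
  constructor
  · rintro ⟨p, hp, rfl⟩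
    exact ⟨p, hp, φ (p ∩ B), ⟨p ∩ B, fun x hx => hx, rfl⟩,
      ψ (p \ B), ⟨p \ B, fun x hx => hx, rfl⟩, rfl⟩
  · rintro ⟨p, hp, r, ⟨a, ha, rfl⟩, s, ⟨b, hb, rfl⟩, rfl⟩
    refine ⟨a ∪ b, ?_, ?_⟩
    · rw [hQ]
      exact ⟨p, hp, Set.union_subset (fun x hx => (ha hx).1) (fun x hx => (hb hx).1)⟩
    · have h1 : (a ∪ b) ∩ B = a := by
        ext x
        constructor
        · rintro ⟨hx | hx, hxB⟩
          · exact hx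
          · exact absurd hxB (hb hx).2
        · intro hx; exact ⟨Or.inl hx, (ha hx).2⟩
      have h2 : (a ∪ b) \ B = b := by
        ext x
        constructor
        · rintro ⟨hx | hx, hxB⟩
          · exact absurd (ha hx).2 hxB
          · exact hx
        · intro hx; exact ⟨Or.inr hx, (hb hx).2⟩
      simp [h1, h2]
end

section
/- Lemma 4: if a transformer φ : Set Σ → Set Σ satisfies PSC, then its direct image ⟨φ⟩ preserves subset closure: for every subset closed Q : Set (Set Σ), the collection ⟨φ⟩ Q is subset closed. -/
/-- Lemma 4: if `φ` satisfies PSC then its direct image `⟨φ⟩` preserves subset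
closure. -/
theorem stmt10 {σ : Type*} (φ : Set σ → Set σ) (hφ : PSC φ) :
    ∀ Q : Set (Set σ), Q = ssc Q → fimg φ Q = ssc (fimg φ Q) := by
  intro Q hQ
  apply Set.Subset.antisymm
  · intro q hq
    exact ⟨q, hq, subset_rfl⟩
  · rintro r ⟨q, ⟨p, hp, rfl⟩, hrq⟩
    obtain ⟨s, hs, hφs⟩ := hφ.2 p r hrq
    exact ⟨s, by rw [hQ]; exact ⟨p, hp, hs⟩, hφs.symm⟩
end

section
/- Lemma 5: if a relation R ⊆ A × B is a partial function (∀ x y y', x R y and x R y' imply y = y'), then the transformer ⟨R⟩ : Set A → Set B satisfies PSC, i.e., ⟨R⟩ is monotone and for all q, r with r ⊆ ⟨R⟩ q there exists s ⊆ q with ⟨R⟩ s = r. -/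
/-- Lemma 5: if `R` is a partial function then `⟨R⟩` satisfies PSC. -/
theorem stmt11 {A B : Type*} (R : Set (A × B))
    (hR : ∀ x y y', (x, y) ∈ R → (x, y') ∈ R → y = y') :
    PSC (dirimg R) := by
  constructor
  · intro p q hpq y ⟨x, hx, hxy⟩
    exact ⟨x, hpq hx, hxy⟩
  · intro q r hr
    refine ⟨{x | x ∈ q ∧ ∃ y ∈ r, (x, y) ∈ R}, fun x hx => hx.1, ?_⟩
    ext y
    constructor
    · rintro ⟨x, ⟨_, y', hy', hxy'⟩, hxy⟩
      exact (hR x y y' hxy hxy') ▸ hy'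
    · intro hy
      obtain ⟨x, hxq, hxy⟩ := hr hy
      exact ⟨x, ⟨hxq, y, hy, hxy⟩, hxy⟩
end

section
/- Lemma 6: if a relation R ⊆ A × B is a partial function (∀ x y y', x R y and x R y' imply y = y'), then the doubly lifted map ⟨⟨R⟩⟩ : Set (Set A) → Set (Set B) preserves subset closure: for every subset closed Q : Set (Set A), the collection ⟨⟨R⟩⟩ Q is subset closed. -/
/-- Lemma 6: if `R` is a partial function then the doubly lifted map `⟨⟨R⟩⟩`
preserves subset closure. -/
theorem stmt13 {A B : Type*} (R : Set (A × B))
    (hR : ∀ x y y', (x, y) ∈ R → (x, y') ∈ R → y = y') :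
    ∀ Q : Set (Set A), Q = ssc Q → fimg (dirimg R) Q = ssc (fimg (dirimg R) Q) := by
  intro Q hQ
  apply Set.Subset.antisymm
  · intro q hq
    exact ⟨q, hq, le_refl q⟩
  · rintro q' ⟨q, ⟨p, hp, rfl⟩, hsub⟩
    refine ⟨{x | x ∈ p ∧ ∃ y ∈ q', (x, y) ∈ R}, ?_, ?_⟩
    · rw [hQ]
      exact ⟨p, hp, fun x hx => hx.1⟩
    · ext y
      constructor
      · intro hy
        obtain ⟨x, hxp, hxy⟩ := hsub hy
        exact ⟨x, ⟨hxp, y, hy, hxy⟩, hxy⟩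
      · rintro ⟨x, ⟨hxp, y0, hy0, hxy0⟩, hxy⟩
        rwa [hR x y y0 hxy hxy0]
end

section
/- Lemma 8: for universally disjunctive transformers φ, ψ : Set Σ → Set Σ with disjoint domains, Dom φ ∩ Dom ψ = ∅, if φ satisfies PSC and ψ satisfies PSC, then their pointwise join φ ⊔ ψ (defined by (φ ⊔ ψ) p = φ p ∪ ψ p) satisfies PSC. -/
lemma univDisj_pointwise {α β : Type*} {φ : Set α → Set β} (h : UnivDisj φ)
    (p : Set α) : φ p = ⋃ x ∈ p, φ {x} := by
  have hp : p = ⋃₀ ((fun x => ({x} : Set α)) '' p) := by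
    ext y; simp
  conv_lhs => rw [hp, h]
  ext y; simp

lemma univDisj_empty_of {α β : Type*} {φ : Set α → Set β} (h : UnivDisj φ)
    {t : Set α} (ht : ∀ x ∈ t, φ {x} = ∅) : φ t = ∅ := by
  rw [univDisj_pointwise h]
  ext y; simp only [Set.mem_iUnion, Set.mem_empty_iff_false, iff_false, not_exists]
  intro x hx
  rw [ht x hx]; simp

lemma univDisj_inter_dom {α β : Type*} {φ : Set α → Set β} (h : UnivDisj φ)
    (p : Set α) : φ (p ∩ Dom φ) = φ p := by
  rw [univDisj_pointwise h (p ∩ Dom φ), univDisj_pointwise h p]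
  ext y
  simp only [Set.mem_iUnion, Set.mem_inter_iff]
  constructor
  · rintro ⟨x, ⟨hx, _⟩, hy⟩; exact ⟨x, hx, hy⟩
  · rintro ⟨x, hx, hy⟩
    by_cases hd : x ∈ Dom φ
    · exact ⟨x, ⟨hx, hd⟩, hy⟩
    · simp only [Dom, Set.mem_setOf_eq, not_not] at hd
      rw [hd] at hy; exact absurd hy (by simp)

/-- Lemma 8: the pointwise join of universally disjunctive PSC transformers with
disjoint domains satisfies PSC. -/
theorem stmt15 {σ : Type*} (φ ψ : Set σ → Set σ)
    (hφd : UnivDisj φ) (hψd : UnivDisj ψ)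
    (hdisj : Dom φ ∩ Dom ψ = ∅)
    (hφ : PSC φ) (hψ : PSC ψ) :
    PSC (fun p => φ p ∪ ψ p) := by
  obtain ⟨hφm, hφs⟩ := hφ
  obtain ⟨hψm, hψs⟩ := hψ
  constructor
  · intro a b hab
    exact Set.union_subset_union (hφm hab) (hψm hab)
  · intro q r hr
    -- split r into parts covered by φ q and the rest (covered by ψ q)
    obtain ⟨s1, hs1q, hs1⟩ := hφs q (r ∩ φ q) Set.inter_subset_right
    obtain ⟨s2, hs2q, hs2⟩ := hψs q (r \ φ q) (by
      intro y hy
      rcases hr hy.1 with h | h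
      · exact absurd h hy.2
      · exact h)
    -- disjoint domains: opposite transformer vanishes on restricted sets
    have hdis : ∀ x, x ∈ Dom φ → x ∉ Dom ψ := by
      intro x hx hx'
      have : x ∈ Dom φ ∩ Dom ψ := ⟨hx, hx'⟩
      rw [hdisj] at this; exact this
    refine ⟨(s1 ∩ Dom φ) ∪ (s2 ∩ Dom ψ), ?_, ?_⟩
    · exact Set.union_subset (le_trans Set.inter_subset_left hs1q)
        (le_trans Set.inter_subset_left hs2q)
    · have hbinφ : ∀ a b : Set σ, φ (a ∪ b) = φ a ∪ φ b := by
        intro a b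
        have := hφd {a, b}
        simp only [Set.sUnion_insert, Set.sUnion_singleton] at this
        rw [this]; ext y; simp
      have hbinψ : ∀ a b : Set σ, ψ (a ∪ b) = ψ a ∪ ψ b := by
        intro a b
        have := hψd {a, b}
        simp only [Set.sUnion_insert, Set.sUnion_singleton] at this
        rw [this]; ext y; simp
      have hφ2 : φ (s2 ∩ Dom ψ) = ∅ :=
        univDisj_empty_of hφd (by
          intro x hx
          by_contra h
          exact hdis x h hx.2)
      have hψ1 : ψ (s1 ∩ Dom φ) = ∅ :=
        univDisj_empty_of hψd (by
          intro x hx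
          by_contra h
          exact hdis x hx.2 h)
      simp only [hbinφ, hbinψ, hφ2, hψ1, univDisj_inter_dom hφd,
        univDisj_inter_dom hψd, Set.union_empty, Set.empty_union, hs1, hs2]
      ext y
      simp only [Set.mem_union, Set.mem_inter_iff, Set.mem_diff]
      constructor
      · rintro (⟨h, _⟩ | ⟨h, _⟩) <;> exact h
      · intro hy
        by_cases h : y ∈ φ q
        · exact Or.inl ⟨hy, h⟩
        · exact Or.inr ⟨hy, h⟩
end

section
/- Lemma 9: for a guard set B ⊆ Σ, if Φ, Ψ : Set (Set Σ) → Set (Set Σ) preserve subset closure (map every subset closed collection to a subset closed collection), then for every Q : Set (Set Σ) — whether or not Q is subset closed — the collection (Φ ◁B▷ Ψ) Q is subset closed. -/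
lemma pow_ssc {α : Type*} (p : Set α) : ({u | u ⊆ p} : Set (Set α)) = ssc {u | u ⊆ p} := by
  ext t
  constructor
  · intro ht; exact ⟨t, ht, le_refl _⟩
  · rintro ⟨q, hq, htq⟩; exact htq.trans hq

/-- Lemma 9: if `Φ` and `Ψ` preserve subset closure, then `(Φ ◁B▷ Ψ) Q` is
subset closed for every `Q` (whether or not `Q` is subset closed). -/
theorem stmt16 {σ : Type*} (B : Set σ) (Φ Ψ : Set (Set σ) → Set (Set σ))
    (hΦ : ∀ Q, Q = ssc Q → Φ Q = ssc (Φ Q))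
    (hΨ : ∀ Q, Q = ssc Q → Ψ Q = ssc (Ψ Q)) :
    ∀ Q : Set (Set σ), hcond B Φ Ψ Q = ssc (hcond B Φ Ψ Q) := by
  intro Q
  ext t
  constructor
  · intro ht; exact ⟨t, ht, le_refl _⟩
  · rintro ⟨q, ⟨p, hp, r, hr, s, hs, rfl⟩, htq⟩
    refine ⟨p, hp, t ∩ r, ?_, t ∩ s, ?_, ?_⟩
    · rw [hΦ _ (pow_ssc (p ∩ B))]
      exact ⟨r, hr, Set.inter_subset_right⟩
    · rw [hΨ _ (pow_ssc (p \ B))]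
      exact ⟨s, hs, Set.inter_subset_right⟩
    · rw [← Set.inter_union_distrib_left]
      exact (Set.inter_eq_left.mpr htq).symm
end
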